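/- For every natural number n, ∑_{k=0}^{n} (−1)^{k+1} · C(n,k) · H_k^{(2)}/(k+1) = (H_n² + H_n^{(2)}) / (2(n+1)), as an identity of real numbers. -/

import Mathlib

/-!
Writing `H2 k` as the partial sum of `1 / (j + 1) ^ 2` and using
`C(n, k) / (k + 1) = C(n + 1, k + 1) / (n + 1)`, an exchange of summations evaluates the left side
as `(1 / (n + 1)) ∑_{i=1}^{n} (-1)^(i-1) C(n, i) / i²`, because the inner sums are tails of
alternating rows of Pascal's triangle. That classical sum equals `(H_n² + H_n^(2)) / 2`: by Pascal's
rule its increment from `n` to `n + 1` is `H_{n+1} / (n + 1)`, which in turn comes from the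
companion identity `∑_{i=1}^{n} (-1)^(i-1) C(n, i) / i = H_n`.
-/

open Finset

noncomputable def H : ℕ → ℝ := fun m => ∑ j ∈ range m, (1 : ℝ) / (j + 1)

noncomputable def H2 : ℕ → ℝ := fun m => ∑ j ∈ range m, (1 : ℝ) / ((j : ℝ) + 1) ^ 2

section CommRing

variable {R : Type*} [CommRing R]

theorem sum_range_neg_one_pow_mul_choose_succ_succ (n r : ℕ) :
    ∑ k ∈ range r, (-1 : R) ^ (k + 1) * ((n + 1).choose (k + 1) : R) =
      (-1) ^ r * (n.choose r : R) - 1 := by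
  have h := congrArg (Int.cast : ℤ → R)
    (Int.alternating_sum_range_choose_eq_choose (n := n) (m := r))
  push_cast at h
  rw [sum_range_succ'] at h
  simp only [pow_zero, Nat.choose_zero_right, Nat.cast_one, mul_one] at h
  linear_combination h

theorem sum_Ico_neg_one_pow_mul_choose_succ_succ {n j : ℕ} (hj : j ≤ n) :
    ∑ k ∈ Ico (j + 1) (n + 1), (-1 : R) ^ (k + 1) * ((n + 1).choose (k + 1) : R) =
      (-1) ^ j * (n.choose (j + 1) : R) := by
  rw [sum_Ico_eq_sub _ (by omega), sum_range_neg_one_pow_mul_choose_succ_succ,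
    sum_range_neg_one_pow_mul_choose_succ_succ, Nat.choose_succ_self]
  ring

def altBinomSum (w : ℕ → R) (n : ℕ) : R :=
  ∑ j ∈ range n, (-1) ^ j * (n.choose (j + 1) : R) * w j

theorem altBinomSum_succ (w : ℕ → R) (n : ℕ) :
    altBinomSum w (n + 1) =
      ∑ j ∈ range (n + 1), (-1) ^ j * (n.choose j : R) * w j + altBinomSum w n := by
  simp only [altBinomSum, Nat.choose_succ_succ', Nat.cast_add, mul_add, add_mul, sum_add_distrib,
    sum_range_succ _ n, Nat.choose_succ_self, Nat.cast_zero, mul_zero, zero_mul, add_zero]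
  ring

theorem altBinomSum_one (n : ℕ) : altBinomSum (fun _ ↦ (1 : R)) (n + 1) = 1 := by
  have h := sum_range_neg_one_pow_mul_choose_succ_succ (R := R) n (n + 1)
  rw [Nat.choose_succ_self, Nat.cast_zero, mul_zero, zero_sub] at h
  simpa [altBinomSum, pow_succ] using h

end CommRing

section Field

variable {K : Type*} [Field K] [CharZero K]

theorem Nat.cast_choose_div_succ (n k : ℕ) :
    (n.choose k : K) / (k + 1) = ((n + 1).choose (k + 1) : K) / (n + 1) := by
  have h := congrArg (Nat.cast : ℕ → K) (Nat.add_one_mul_choose_eq n k)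
  push_cast at h
  field_simp
  linear_combination h

theorem sum_range_neg_one_pow_mul_choose_mul_div_succ (w : ℕ → K) (n : ℕ) :
    ∑ j ∈ range (n + 1), (-1) ^ j * (n.choose j : K) * (w j / (j + 1)) =
      altBinomSum w (n + 1) / (n + 1) := by
  rw [altBinomSum, sum_div]
  refine sum_congr rfl fun j _ ↦ ?_
  rw [mul_div_assoc', mul_right_comm, mul_div_assoc, Nat.cast_choose_div_succ]
  ring

theorem sum_range_neg_one_pow_mul_choose_mul_partial_sum_div_succ (b : ℕ → K) (n : ℕ) :
    ∑ k ∈ range (n + 1), (-1) ^ (k + 1) * (n.choose k : K) * (∑ j ∈ range k, b j) / (k + 1) =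
      altBinomSum b n / (n + 1) := by
  have hterm : ∀ k, (-1) ^ (k + 1) * (n.choose k : K) * (∑ j ∈ range k, b j) / (k + 1) =
      (∑ j ∈ range k, (-1) ^ (k + 1) * ((n + 1).choose (k + 1) : K) * b j) / (n + 1) := by
    intro k
    rw [← mul_sum, mul_div_right_comm, mul_div_assoc, Nat.cast_choose_div_succ]
    ring
  simp only [hterm, ← sum_div]
  congr 1
  -- after swapping the sums, each inner sum is a tail of an alternating row of Pascal's triangle
  rw [sum_comm' (t' := range n) (s' := fun j ↦ Ico (j + 1) (n + 1))
    (by intro k j; simp only [mem_range, mem_Ico]; omega)]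
  refine sum_congr rfl fun j hj ↦ ?_
  rw [← sum_mul, sum_Ico_neg_one_pow_mul_choose_succ_succ (by rw [mem_range] at hj; omega)]

end Field

theorem H_succ (n : ℕ) : H (n + 1) = H n + 1 / (n + 1) := sum_range_succ _ n

theorem H2_succ (n : ℕ) : H2 (n + 1) = H2 n + 1 / ((n : ℝ) + 1) ^ 2 := sum_range_succ _ n

theorem altBinomSum_one_div_succ (n : ℕ) :
    altBinomSum (fun j : ℕ ↦ 1 / ((j : ℝ) + 1)) n = H n := by
  induction n with
  | zero => simp [altBinomSum, H]
  | succ n ih =>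
    have key := sum_range_neg_one_pow_mul_choose_mul_div_succ (fun _ ↦ (1 : ℝ)) n
    rw [altBinomSum_one] at key
    rw [altBinomSum_succ, key, ih, H_succ]
    ring

theorem altBinomSum_one_div_succ_sq (n : ℕ) :
    altBinomSum (fun j : ℕ ↦ 1 / ((j : ℝ) + 1) ^ 2) n = (H n ^ 2 + H2 n) / 2 := by
  induction n with
  | zero => simp [altBinomSum, H, H2]
  | succ n ih =>
    have key := sum_range_neg_one_pow_mul_choose_mul_div_succ (fun j : ℕ ↦ 1 / ((j : ℝ) + 1)) n
    simp only [div_div, ← sq, altBinomSum_one_div_succ] at key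
    rw [altBinomSum_succ, key, ih, H_succ, H2_succ]
    field_simp
    ring

theorem stmt_13 (n : ℕ) :
    ∑ k ∈ range (n + 1), (-1 : ℝ) ^ (k + 1) * (Nat.choose n k : ℝ) * H2 k / ((k : ℝ) + 1) =
      (H n ^ 2 + H2 n) / (2 * ((n : ℝ) + 1)) := by
  calc _ = altBinomSum (fun j : ℕ ↦ 1 / ((j : ℝ) + 1) ^ 2) n / ((n : ℝ) + 1) :=
        sum_range_neg_one_pow_mul_choose_mul_partial_sum_div_succ _ n
    _ = _ := by rw [altBinomSum_one_div_succ_sq, div_div]
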